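/- For every n ≥ 0, c_{n,n+1} = α_{n+1} · ℙ( Σ_{i=k}^n Z_i ≥ 0 for every k = 1, 2, …, n ), where Z_i = F_i − H_i. In particular, when α_{n+1} > 0, P^n := c_{n,n+1}/α_{n+1} equals this probability. -/

import Mathlib

/-!
`c_{m,n}` is the probability that for every `x ≤ m + 1` the sequence `H` has strictly fewer
successes in `[x, m]` than `F` has in `[x, n]`. Indeed, split this event according to the last
success `j ≤ m` of `H` (with `j = 0` if there is none, matching `α_0 = 1`) and the last success
`k` of `F` in `[m + 1, n]`, which must exist: what remains is the same event for
`(j - 1, k - 1)`, which involves only earlier coordinates, so by independence the piece has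
probability `π_j^m π_k^n c_{j-1,k-1}`. For `(m, n) = (n, n + 1)` the event says that
`F_{n+1} = 1` and that all suffix sums of `F - H` up to `n` are nonnegative.
-/

open MeasureTheory ProbabilityTheory Finset

/-- `j` is the last index in `[1, m]` with `g j = 1`, or `j = 0` if there is none. -/
def IsLastSuccess (g : ℕ → ℕ) (j m : ℕ) : Prop :=
  ∀ i ∈ Icc (max j 1) m, g i = if i = j then 1 else 0

/-- Indexed so that `c_{m,n}` is the probability of `Leads F H (m + 1) (n + 1)`. -/
def Leads (f h : ℕ → ℕ) (j k : ℕ) : Prop :=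
  ∀ x ∈ Icc 1 j, ∑ i ∈ Ico x j, h i < ∑ i ∈ Ico x k, f i

section Combinatorics

lemma le_one_of_eq_zero_or_eq_one {g : ℕ → ℕ} (hg : ∀ i, g i = 0 ∨ g i = 1) (i : ℕ) : g i ≤ 1 := by
  rcases hg i with h | h <;> omega

variable {f f' g g' h h' : ℕ → ℕ} {j j' k m n : ℕ}

lemma isLastSuccess_congr (hg : Set.EqOn g g' (Icc j m)) :
    IsLastSuccess g j m ↔ IsLastSuccess g' j m := by
  refine forall₂_congr fun i hi => ?_
  rw [hg (Icc_subset_Icc_left (le_max_left j 1) hi)]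

lemma leads_congr (hf : Set.EqOn f f' (range k)) (hh : Set.EqOn h h' (range j)) :
    Leads f h j k ↔ Leads f' h' j k := by
  refine forall₂_congr fun x _ => ?_
  rw [sum_congr rfl fun i hi => hh (mem_range.2 (mem_Ico.1 hi).2),
    sum_congr rfl fun i hi => hf (mem_range.2 (mem_Ico.1 hi).2)]

lemma leads_zero_left : Leads f h 0 k := by
  simp [Leads]

lemma IsLastSuccess.sum_Ico_eq (hg : IsLastSuccess g j m) (hjm : j ≤ m) {x : ℕ} (hx : 1 ≤ x) :
    ∑ i ∈ Ico x (m + 1), g i = ∑ i ∈ Ico x j, g i + if x ≤ j then 1 else 0 := by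
  rcases le_or_gt x j with hxj | hjx
  · rw [if_pos hxj, ← sum_Ico_consecutive g hxj (by omega : j ≤ m + 1)]
    congr 1
    calc ∑ i ∈ Ico j (m + 1), g i = ∑ i ∈ Ico j (m + 1), if i = j then 1 else 0 :=
          sum_congr rfl fun i hi => hg i (by rw [mem_Ico] at hi; rw [mem_Icc]; omega)
      _ = 1 := by rw [sum_ite_eq', if_pos (by rw [mem_Ico]; omega)]
  · rw [if_neg (by omega), Ico_eq_empty_of_le hjx.le, sum_empty, add_zero]
    refine sum_eq_zero fun i hi => ?_
    rw [mem_Ico] at hi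
    rw [hg i (mem_Icc.2 ⟨by omega, by omega⟩), if_neg (by omega)]

lemma exists_isLastSuccess_of_pos (hg : ∀ i, g i ≤ 1) {a b : ℕ} (ha : 1 ≤ a)
    (hpos : 0 < ∑ i ∈ Icc a b, g i) : ∃ k ∈ Icc a b, IsLastSuccess g k b := by
  classical
  set K := (Icc a b).filter (g · ≠ 0)
  have hK : K.Nonempty := by
    obtain ⟨i, hi, hgi⟩ := exists_ne_zero_of_sum_ne_zero hpos.ne'
    exact ⟨i, mem_filter.2 ⟨hi, hgi⟩⟩
  obtain ⟨hk, hgk⟩ := mem_filter.1 (K.max'_mem hK)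
  refine ⟨_, hk, fun i hi => ?_⟩
  rw [mem_Icc] at hk hi
  split_ifs with hik
  · have := hg i
    subst hik
    omega
  · by_contra hgi
    have := K.le_max' i (mem_filter.2 ⟨mem_Icc.2 ⟨by omega, hi.2⟩, hgi⟩)
    omega

lemma exists_isLastSuccess (hg : ∀ i, g i ≤ 1) (m : ℕ) : ∃ j ≤ m, IsLastSuccess g j m := by
  rcases Nat.eq_zero_or_pos (∑ i ∈ Icc 1 m, g i) with hzero | hpos
  · refine ⟨0, Nat.zero_le m, fun i hi => ?_⟩
    rw [if_neg (by rw [mem_Icc] at hi; omega)]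
    exact sum_eq_zero_iff.1 hzero i hi
  · obtain ⟨j, hj, hjm⟩ := exists_isLastSuccess_of_pos hg le_rfl hpos
    exact ⟨j, (mem_Icc.1 hj).2, hjm⟩

lemma IsLastSuccess.le (hg : IsLastSuccess g j m) (hg' : IsLastSuccess g j' m) (hj' : j' ≤ m) :
    j' ≤ j := by
  by_contra! hjj'
  have h1 := hg j' (mem_Icc.2 ⟨by omega, hj'⟩)
  have h2 := hg' j' (mem_Icc.2 ⟨by omega, hj'⟩)
  rw [if_neg hjj'.ne'] at h1
  rw [if_pos rfl] at h2
  omega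

lemma IsLastSuccess.unique (hg : IsLastSuccess g j m) (hg' : IsLastSuccess g j' m) (hj : j ≤ m)
    (hj' : j' ≤ m) : j = j' :=
  le_antisymm (hg'.le hg hj) (hg.le hg' hj')

lemma leads_succ_iff (hf : ∀ i, f i ≤ 1) (hh : ∀ i, h i ≤ 1) :
    Leads f h (m + 1) (n + 1) ↔ ∃ j ∈ range (m + 1), ∃ k ∈ Icc (m + 1) n,
      IsLastSuccess h j m ∧ IsLastSuccess f k n ∧ Leads f h j k := by
  constructor
  · intro hlead
    have hpos : 0 < ∑ i ∈ Icc (m + 1) n, f i := by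
      have := hlead (m + 1) (by simp)
      rwa [Ico_self, sum_empty, Ico_add_one_right_eq_Icc] at this
    obtain ⟨k, hk, hfk⟩ := exists_isLastSuccess_of_pos hf (by omega) hpos
    obtain ⟨j, hj, hhj⟩ := exists_isLastSuccess hh m
    refine ⟨j, mem_range.2 (by omega), k, hk, hhj, hfk, fun x hx => ?_⟩
    rw [mem_Icc] at hk hx
    have := hlead x (mem_Icc.2 ⟨hx.1, by omega⟩)
    rw [hhj.sum_Ico_eq hj hx.1, hfk.sum_Ico_eq hk.2 hx.1] at this
    split_ifs at this <;> omega
  · rintro ⟨j, hj, k, hk, hhj, hfk, hlead⟩ x hx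
    rw [mem_range] at hj
    rw [mem_Icc] at hk hx
    rw [hhj.sum_Ico_eq (by omega) hx.1, hfk.sum_Ico_eq hk.2 hx.1, if_pos (by omega : x ≤ k)]
    split_ifs with hxj
    · have := hlead x (mem_Icc.2 ⟨hx.1, hxj⟩)
      omega
    · rw [Ico_eq_empty_of_le (by omega), sum_empty]
      omega

lemma leads_succ_succ_iff (hf : ∀ i, f i ≤ 1) (n : ℕ) :
    Leads f h (n + 1) (n + 2) ↔
      f (n + 1) = 1 ∧ ∀ x ∈ Icc 1 n, ∑ i ∈ Icc x n, h i ≤ ∑ i ∈ Icc x n, f i := by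
  have hsplit : ∀ x ≤ n + 1, ∑ i ∈ Ico x (n + 2), f i = ∑ i ∈ Icc x n, f i + f (n + 1) :=
    fun x hx => by rw [sum_Ico_succ_top (by omega), Ico_add_one_right_eq_Icc]
  constructor
  · intro hlead
    have hlast := hlead (n + 1) (by simp)
    rw [hsplit _ le_rfl, Ico_self, sum_empty, Icc_eq_empty (by omega), sum_empty] at hlast
    have hfn : f (n + 1) = 1 := by have := hf (n + 1); omega
    refine ⟨hfn, fun x hx => ?_⟩
    rw [mem_Icc] at hx
    have := hlead x (mem_Icc.2 ⟨hx.1, by omega⟩)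
    rw [hsplit x (by omega), Ico_add_one_right_eq_Icc] at this
    omega
  · rintro ⟨hlast, hle⟩ x hx
    rw [mem_Icc] at hx
    rw [hsplit x hx.2, Ico_add_one_right_eq_Icc, hlast]
    rcases hx.2.lt_or_eq with hxn | rfl
    · have := hle x (mem_Icc.2 ⟨hx.1, by omega⟩)
      omega
    · simp

end Combinatorics

lemma Finset.disjoint_disjSum_disjSum {α β : Type*} {s₁ s₂ : Finset α} {t₁ t₂ : Finset β}
    (hs : Disjoint s₁ s₂) (ht : Disjoint t₁ t₂) : Disjoint (s₁.disjSum t₁) (s₂.disjSum t₂) := by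
  rw [Finset.disjoint_left] at hs ht ⊢
  rintro (i | i) h₁ h₂
  · exact hs (inl_mem_disjSum.1 h₁) (inl_mem_disjSum.1 h₂)
  · exact ht (inr_mem_disjSum.1 h₁) (inr_mem_disjSum.1 h₂)

lemma dependsOn_disjSum {ι ι' β : Type*} {q : (ι → β) → (ι' → β) → Prop} {s : Finset ι}
    {t : Finset ι'}
    (hq : ∀ ⦃f f' h h'⦄, Set.EqOn f f' s → Set.EqOn h h' t → (q f h ↔ q f' h')) :
    DependsOn (fun x : ι ⊕ ι' → β => q (x ∘ Sum.inl) (x ∘ Sum.inr)) (s.disjSum t) :=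
  fun _ _ hxy => propext <| hq (fun i hi => hxy _ (by simpa using hi))
    (fun i hi => hxy _ (by simpa using hi))

section Independence

variable {Ω ι β : Type*} [MeasurableSpace Ω] [MeasurableSpace β] [MeasurableSingletonClass β]
  [Countable β] {X : ι → Ω → β} {S T : Finset ι} {p q : (ι → β) → Prop}

lemma measurableSet_setOf_dependsOn (hX : ∀ i, Measurable (X i)) (hp : DependsOn p S) :
    MeasurableSet {ω | p (X · ω)} := by
  obtain ⟨p', rfl⟩ := dependsOn_iff_exists_comp.1 hp
  exact (measurable_pi_iff.2 fun i : (S : Set ι) => hX i) .of_discrete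

lemma ProbabilityTheory.iIndepFun.measure_inter_eq_mul_of_dependsOn {μ : Measure Ω}
    (hind : iIndepFun X μ) (hX : ∀ i, Measurable (X i)) (hST : Disjoint S T)
    (hp : DependsOn p S) (hq : DependsOn q T) :
    μ {ω | p (X · ω) ∧ q (X · ω)} = μ {ω | p (X · ω)} * μ {ω | q (X · ω)} := by
  obtain ⟨p', rfl⟩ := dependsOn_iff_exists_comp.1 hp
  obtain ⟨q', rfl⟩ := dependsOn_iff_exists_comp.1 hq
  exact (hind.indepFun_finset S T hST hX).measure_inter_preimage_eq_mul {y | p' y} {y | q' y}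
    .of_discrete .of_discrete

end Independence

section Bernoulli

variable {Ω : Type*} [MeasurableSpace Ω] {P : Measure Ω} [IsProbabilityMeasure P] {α : ℕ → ℝ}
  {X : ℕ → Ω → ℕ}

lemma measurableSet_isLastSuccess (hX : ∀ i, Measurable (X i)) (j m : ℕ) :
    MeasurableSet {ω | IsLastSuccess (X · ω) j m} :=
  measurableSet_setOf_dependsOn (S := Icc j m) hX fun _ _ h =>
    propext <| isLastSuccess_congr fun i hi => h i hi

lemma measureReal_eq_ite_of_bernoulli (hα : ∀ k, α k ∈ Set.Icc (0:ℝ) 1)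
    (hX : ∀ i, Measurable (X i)) (hXval : ∀ i ω, X i ω = 0 ∨ X i ω = 1)
    (hX1 : ∀ i, 1 ≤ i → P {ω | X i ω = 1} = ENNReal.ofReal (α i)) {i : ℕ} (hi : 1 ≤ i)
    (b : Prop) [Decidable b] :
    P.real {ω | X i ω = if b then 1 else 0} = if b then α i else 1 - α i := by
  have hone : P.real {ω | X i ω = 1} = α i := by
    rw [measureReal_def, hX1 i hi, ENNReal.toReal_ofReal (hα i).1]
  split_ifs
  · exact hone
  · have hzero : {ω | X i ω = 0} = {ω | X i ω = 1}ᶜ := by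
      ext ω
      rcases hXval i ω with h | h <;> simp [h]
    have hmeas : MeasurableSet {ω | X i ω = 1} := hX i (measurableSet_singleton 1)
    rw [hzero, measureReal_compl hmeas, probReal_univ, hone]

lemma measureReal_isLastSuccess (hα0 : α 0 = 1) (hα : ∀ k, α k ∈ Set.Icc (0:ℝ) 1)
    (hX : ∀ i, Measurable (X i)) (hXval : ∀ i ω, X i ω = 0 ∨ X i ω = 1) (hind : iIndepFun X P)
    (hX1 : ∀ i, 1 ≤ i → P {ω | X i ω = 1} = ENNReal.ofReal (α i)) {j m : ℕ} (hjm : j ≤ m) :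
    P.real {ω | IsLastSuccess (X · ω) j m} = α j * ∏ i ∈ Icc (j + 1) m, (1 - α i) := by
  have hinter : {ω | IsLastSuccess (X · ω) j m} =
      ⋂ i ∈ Icc (max j 1) m, {ω | X i ω = if i = j then 1 else 0} := by
    ext ω
    simp [IsLastSuccess]
  have hprod : P.real {ω | IsLastSuccess (X · ω) j m} =
      ∏ i ∈ Icc (max j 1) m, if i = j then α i else 1 - α i := by
    rw [measureReal_def, hinter,
      hind.meas_biInter (s := fun i => {ω | X i ω = if i = j then 1 else 0})
        fun i _ => ⟨_, measurableSet_singleton _, rfl⟩, ENNReal.toReal_prod]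
    refine prod_congr rfl fun i hi => ?_
    rw [← measureReal_def,
      measureReal_eq_ite_of_bernoulli hα hX hXval hX1 (le_of_max_le_right (mem_Icc.1 hi).1)]
  rw [hprod]
  rcases Nat.eq_zero_or_pos j with rfl | hj
  · rw [hα0, one_mul]
    exact prod_congr rfl fun i hi => if_neg (by rw [mem_Icc] at hi; omega)
  · rw [max_eq_left hj, ← insert_Icc_add_one_left_eq_Icc hjm, prod_insert (by simp), if_pos rfl]
    congr 1
    exact prod_congr rfl fun i hi => if_neg (by rw [mem_Icc] at hi; omega)

end Bernoulli

section Pair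

variable {Ω ι ι' β : Type*} [MeasurableSpace Ω] [MeasurableSpace β] [MeasurableSingletonClass β]
  [Countable β] {F : ι → Ω → β} {H : ι' → Ω → β} {s s' : Finset ι} {t t' : Finset ι'}
  {p q : (ι → β) → (ι' → β) → Prop}

lemma measurableSet_setOf_of_eqOn (hF : ∀ i, Measurable (F i)) (hH : ∀ i, Measurable (H i))
    (hp : ∀ ⦃f f' h h'⦄, Set.EqOn f f' s → Set.EqOn h h' t → (p f h ↔ p f' h')) :
    MeasurableSet {ω | p (F · ω) (H · ω)} :=
  measurableSet_setOf_dependsOn (X := Sum.elim F H) (Sum.forall.2 ⟨hF, hH⟩)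
    (dependsOn_disjSum hp)

lemma ProbabilityTheory.iIndepFun.measureReal_setOf_and_eq_mul {μ : Measure Ω}
    (hind : iIndepFun (Sum.elim F H) μ) (hF : ∀ i, Measurable (F i))
    (hH : ∀ i, Measurable (H i)) (hs : Disjoint s s') (ht : Disjoint t t')
    (hp : ∀ ⦃f f' h h'⦄, Set.EqOn f f' s → Set.EqOn h h' t → (p f h ↔ p f' h'))
    (hq : ∀ ⦃f f' h h'⦄, Set.EqOn f f' s' → Set.EqOn h h' t' → (q f h ↔ q f' h')) :
    μ.real {ω | p (F · ω) (H · ω) ∧ q (F · ω) (H · ω)} =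
      μ.real {ω | p (F · ω) (H · ω)} * μ.real {ω | q (F · ω) (H · ω)} := by
  simp only [measureReal_def, ← ENNReal.toReal_mul]
  exact congrArg ENNReal.toReal <| hind.measure_inter_eq_mul_of_dependsOn
    (Sum.forall.2 ⟨hF, hH⟩) (disjoint_disjSum_disjSum hs ht) (dependsOn_disjSum hp)
    (dependsOn_disjSum hq)

end Pair

section RandomWalk

variable {Ω : Type*} [MeasurableSpace Ω] {P : Measure Ω} {F H : ℕ → Ω → ℕ}

lemma measureReal_isLastSuccess_and_leads (hF : ∀ i, Measurable (F i))
    (hH : ∀ i, Measurable (H i)) (hind : iIndepFun (Sum.elim F H) P) (j k m n : ℕ) :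
    P.real {ω | (IsLastSuccess (H · ω) j m ∧ IsLastSuccess (F · ω) k n) ∧
        Leads (F · ω) (H · ω) j k} =
      P.real {ω | IsLastSuccess (H · ω) j m} * P.real {ω | IsLastSuccess (F · ω) k n} *
        P.real {ω | Leads (F · ω) (H · ω) j k} := by
  have hdisj (a b : ℕ) : Disjoint (Icc a b) (range a) :=
    disjoint_left.2 fun i hi hi' => by simp only [mem_Icc, mem_range] at hi hi'; omega
  rw [hind.measureReal_setOf_and_eq_mul (p := fun f h => IsLastSuccess h j m ∧ IsLastSuccess f k n)
      (q := fun f h => Leads f h j k) hF hH (hdisj k n) (hdisj j m)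
      (fun _ _ _ _ hf hh => and_congr (isLastSuccess_congr hh) (isLastSuccess_congr hf))
      (fun _ _ _ _ => leads_congr),
    hind.measureReal_setOf_and_eq_mul (p := fun _ h => IsLastSuccess h j m)
      (q := fun f _ => IsLastSuccess f k n) hF hH (disjoint_empty_left (Icc k n))
      (disjoint_empty_right (Icc j m))
      (fun _ _ _ _ _ hh => isLastSuccess_congr hh) (fun _ _ _ _ hf _ => isLastSuccess_congr hf)]

lemma measureReal_leads_succ [IsFiniteMeasure P] (hF : ∀ i, Measurable (F i))
    (hH : ∀ i, Measurable (H i))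
    (hFval : ∀ i ω, F i ω = 0 ∨ F i ω = 1) (hHval : ∀ i ω, H i ω = 0 ∨ H i ω = 1)
    (hind : iIndepFun (Sum.elim F H) P) (m n : ℕ) :
    P.real {ω | Leads (F · ω) (H · ω) (m + 1) (n + 1)} =
      ∑ j ∈ range (m + 1), ∑ k ∈ Icc (m + 1) n, P.real {ω | IsLastSuccess (H · ω) j m} *
        P.real {ω | IsLastSuccess (F · ω) k n} * P.real {ω | Leads (F · ω) (H · ω) j k} := by
  set E : ℕ × ℕ → Set Ω := fun jk => {ω | (IsLastSuccess (H · ω) jk.1 m ∧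
    IsLastSuccess (F · ω) jk.2 n) ∧ Leads (F · ω) (H · ω) jk.1 jk.2}
  have hunion : {ω | Leads (F · ω) (H · ω) (m + 1) (n + 1)} =
      ⋃ jk ∈ range (m + 1) ×ˢ Icc (m + 1) n, E jk := by
    ext ω
    simp only [E, Set.mem_ofPred_eq, Set.mem_iUnion, mem_product, exists_prop, Prod.exists,
      leads_succ_iff (le_one_of_eq_zero_or_eq_one (hFval · ω))
        (le_one_of_eq_zero_or_eq_one (hHval · ω))]
    tauto
  have hdisj :
      ((range (m + 1) ×ˢ Icc (m + 1) n : Finset (ℕ × ℕ)) : Set (ℕ × ℕ)).PairwiseDisjoint E := by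
    rintro ⟨j, k⟩ hjk ⟨j', k'⟩ hjk' hne
    simp only [coe_product, Set.mem_prod, mem_coe, mem_range, mem_Icc] at hjk hjk'
    refine Set.disjoint_left.2 fun ω ⟨⟨hj, hk⟩, _⟩ ⟨⟨hj', hk'⟩, _⟩ => hne ?_
    rw [Prod.mk.injEq]
    exact ⟨hj.unique hj' (by omega) (by omega), hk.unique hk' (by omega) (by omega)⟩
  have hmeas (jk : ℕ × ℕ) : MeasurableSet (E jk) :=
    ((measurableSet_isLastSuccess hH jk.1 m).inter (measurableSet_isLastSuccess hF jk.2 n)).inter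
      (measurableSet_setOf_of_eqOn (p := fun f h => Leads f h jk.1 jk.2) hF hH
        fun _ _ _ _ => leads_congr)
  rw [hunion, measureReal_biUnion_finset hdisj fun jk _ => hmeas jk, sum_product]
  exact sum_congr rfl fun j _ => sum_congr rfl fun k _ =>
    measureReal_isLastSuccess_and_leads hF hH hind j k m n

variable {α : ℕ → ℝ}

lemma c_eq_measureReal_leads [IsProbabilityMeasure P] (hα0 : α 0 = 1)
    (hα : ∀ k, α k ∈ Set.Icc (0:ℝ) 1)
    (hF : ∀ i, Measurable (F i)) (hH : ∀ i, Measurable (H i))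
    (hFval : ∀ i ω, F i ω = 0 ∨ F i ω = 1) (hHval : ∀ i ω, H i ω = 0 ∨ H i ω = 1)
    (hind : iIndepFun (Sum.elim F H) P)
    (hF1 : ∀ i, 1 ≤ i → P {ω | F i ω = 1} = ENNReal.ofReal (α i))
    (hH1 : ∀ i, 1 ≤ i → P {ω | H i ω = 1} = ENNReal.ofReal (α i))
    {c : ℤ → ℤ → ℝ} (hc1 : ∀ n : ℕ, c (-1) n = 1)
    (hcr : ∀ m n : ℕ, m ≤ n →
      c m n = ∑ j ∈ range (m + 1), ∑ k ∈ Icc (m + 1) n,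
        (α j * ∏ i ∈ Icc (j + 1) m, (1 - α i)) * (α k * ∏ i ∈ Icc (k + 1) n, (1 - α i)) *
          c ((j : ℤ) - 1) ((k : ℤ) - 1))
    (n : ℕ) : ∀ m ≤ n, c m n = P.real {ω | Leads (F · ω) (H · ω) (m + 1) (n + 1)} := by
  induction n using Nat.strong_induction_on with
  | _ n ih =>
  intro m hmn
  have hc_pred (j : ℕ) (hj : j ≤ m) (k : ℕ) (hk : k ∈ Icc (m + 1) n) :
      c ((j : ℤ) - 1) ((k : ℤ) - 1) = P.real {ω | Leads (F · ω) (H · ω) j k} := by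
    rw [mem_Icc] at hk
    obtain ⟨k, rfl⟩ : ∃ k', k = k' + 1 := ⟨k - 1, by omega⟩
    rcases j with _ | j
    · simp [leads_zero_left, hc1]
    · push_cast
      simp only [add_sub_cancel_right]
      exact ih k (by omega) j (by omega)
  rw [hcr m n hmn, measureReal_leads_succ hF hH hFval hHval hind m n]
  refine sum_congr rfl fun j hj => sum_congr rfl fun k hk => ?_
  have hjm : j ≤ m := Nat.lt_succ_iff.1 (mem_range.1 hj)
  have hindH := hind.precomp Sum.inr_injective
  have hindF := hind.precomp Sum.inl_injective
  rw [measureReal_isLastSuccess hα0 hα hH hHval hindH hH1 hjm,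
    measureReal_isLastSuccess hα0 hα hF hFval hindF hF1 (mem_Icc.1 hk).2, hc_pred j hjm k hk]

lemma measureReal_leads_succ_succ (hα : ∀ k, α k ∈ Set.Icc (0:ℝ) 1)
    (hF : ∀ i, Measurable (F i)) (hH : ∀ i, Measurable (H i))
    (hFval : ∀ i ω, F i ω = 0 ∨ F i ω = 1) (hind : iIndepFun (Sum.elim F H) P)
    (hF1 : ∀ i, 1 ≤ i → P {ω | F i ω = 1} = ENNReal.ofReal (α i)) (n : ℕ) :
    P.real {ω | Leads (F · ω) (H · ω) (n + 1) (n + 2)} = α (n + 1) *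
      P.real {ω | ∀ x ∈ Icc 1 n, ∑ i ∈ Icc x n, H i ω ≤ ∑ i ∈ Icc x n, F i ω} := by
  have hsuffix ⦃f f' h h' : ℕ → ℕ⦄ (hf : Set.EqOn f f' (Icc 1 n)) (hh : Set.EqOn h h' (Icc 1 n)) :
      (∀ x ∈ Icc 1 n, ∑ i ∈ Icc x n, h i ≤ ∑ i ∈ Icc x n, f i) ↔
        ∀ x ∈ Icc 1 n, ∑ i ∈ Icc x n, h' i ≤ ∑ i ∈ Icc x n, f' i := by
    refine forall₂_congr fun x hx => ?_
    have hsub : Icc x n ⊆ Icc 1 n := Icc_subset_Icc_left (mem_Icc.1 hx).1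
    rw [sum_congr rfl fun i hi => hh (hsub hi), sum_congr rfl fun i hi => hf (hsub hi)]
  have hleads : {ω | Leads (F · ω) (H · ω) (n + 1) (n + 2)} = {ω | F (n + 1) ω = 1 ∧
      ∀ x ∈ Icc 1 n, ∑ i ∈ Icc x n, H i ω ≤ ∑ i ∈ Icc x n, F i ω} := by
    ext ω
    exact leads_succ_succ_iff (le_one_of_eq_zero_or_eq_one (hFval · ω)) n
  have hlast : P.real {ω | F (n + 1) ω = 1} = α (n + 1) := by
    rw [measureReal_def, hF1 _ (Nat.le_add_left 1 n), ENNReal.toReal_ofReal (hα _).1]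
  rw [hleads, hind.measureReal_setOf_and_eq_mul (p := fun f _ => f (n + 1) = 1)
    (s := {n + 1}) (t := ∅) hF hH (disjoint_singleton_left.2 (by simp)) (disjoint_empty_left _)
    (fun _ _ _ _ hf _ => by rw [hf (mem_singleton_self _)]) hsuffix, hlast]

end RandomWalk

theorem c_succ_eq_random_walk_probability
    {Ω : Type*} [MeasurableSpace Ω] (P : Measure Ω) [IsProbabilityMeasure P]
    (α : ℕ → ℝ) (hα0 : α 0 = 1) (hα : ∀ k, α k ∈ Set.Icc (0:ℝ) 1)
    (F H : ℕ → Ω → ℕ)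
    (hFmeas : ∀ i, Measurable (F i)) (hHmeas : ∀ i, Measurable (H i))
    (hFval : ∀ i ω, F i ω = 0 ∨ F i ω = 1)
    (hHval : ∀ i ω, H i ω = 0 ∨ H i ω = 1)
    (hindep : iIndepFun (Sum.elim F H) P)
    (hF1 : ∀ i, 1 ≤ i → P {ω | F i ω = 1} = ENNReal.ofReal (α i))
    (hH1 : ∀ i, 1 ≤ i → P {ω | H i ω = 1} = ENNReal.ofReal (α i))
    (c : ℤ → ℤ → ℝ)
    (hc1 : ∀ n : ℕ, c (-1) n = 1)
    (hcr : ∀ m n : ℕ, m ≤ n →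
      c m n = ∑ j ∈ Finset.range (m + 1), ∑ k ∈ Finset.Icc (m + 1) n,
        (α j * ∏ i ∈ Finset.Icc (j + 1) m, (1 - α i)) *
          (α k * ∏ i ∈ Finset.Icc (k + 1) n, (1 - α i)) *
            c ((j : ℤ) - 1) ((k : ℤ) - 1))
    (n : ℕ) :
    c n (n + 1) = α (n + 1) * (P {ω | ∀ k ∈ Finset.Icc 1 n,
        (∑ i ∈ Finset.Icc k n, H i ω) ≤ ∑ i ∈ Finset.Icc k n, F i ω}).toReal ∧
    (0 < α (n + 1) →
      c n (n + 1) / α (n + 1) = (P {ω | ∀ k ∈ Finset.Icc 1 n,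
        (∑ i ∈ Finset.Icc k n, H i ω) ≤ ∑ i ∈ Finset.Icc k n, F i ω}).toReal) := by
  have hc : c n (n + 1) = α (n + 1) * P.real {ω | ∀ k ∈ Finset.Icc 1 n,
      (∑ i ∈ Finset.Icc k n, H i ω) ≤ ∑ i ∈ Finset.Icc k n, F i ω} := by
    have := c_eq_measureReal_leads hα0 hα hFmeas hHmeas hFval hHval hindep hF1 hH1 hc1 hcr
      (n + 1) n n.le_succ
    push_cast at this
    rw [this, measureReal_leads_succ_succ hα hFmeas hHmeas hFval hindep hF1 n]
  exact ⟨hc, fun hpos => by rw [hc, mul_div_cancel_left₀ _ hpos.ne', measureReal_def]⟩
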